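/- Let V ⊆ S_e be a k-subspace of dimension t ≥ 2 spanned by forms of degree e ≥ 2, and suppose h_1(V) = r. If h_{e−1}(V) ≥ r·t − t² + 2, then there exists a (t−1)-dimensional k-subspace W ⊆ V with h_1(W) = r (i.e., there exists a level quotient of type t−1 and the same socle degree having codimension r). -/

import Mathlib

/-!
In characteristic zero, a space `W ⊆ S_e` has `h_1(W) = r` exactly when no nonzero directional
derivative `∂_v = ∑ vᵢ ∂ᵢ` annihilates `W`: as `∂_v` commutes with the partial derivatives, it
kills `W` iff it kills the space of linear forms `D_1(W)` (Euler's identity gives `⇐`), and a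
space of linear forms is all of `S_1` iff no nonzero `∂_v` kills it.

Suppose no hyperplane `ker β` of `V` satisfies `h_1 = r`. Then each `β ≠ 0` comes with `v ≠ 0`
and `h ≠ 0` such that `∂_v x = β(x) h` on `V`. Do this for the coordinate functionals
`δ_1, …, δ_t` of a basis `b_1, …, b_t`, getting `v_j, h_j` (the `v_j` are independent, since
`∂_{v_j} b_i = δ_{ij} h_j`), and for `δ_1 + ⋯ + δ_t`, getting `v_0, h_0`. The directions
`Z = ⟨v_0, …, v_t⟩` satisfy `∂_Z V ⊆ H = ⟨h_0, …, h_t⟩`. If `v_0 = ∑ c_j v_j`, evaluating at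
`b_j` gives `h_0 = c_j h_j`, so `dim Z = t` and `dim H = 1`; otherwise `dim Z = t + 1` and
`dim H ≤ t + 1`. A complement of `Z` contributes at most `(r - dim Z) t` further first
derivatives of `V`, so `h_{e-1}(V) ≤ rt - t² + 1`.
-/

open MvPolynomial

/-- One step of differentiation: the span of all first partial derivatives of elements of `W`. -/
noncomputable def derStep (k : Type*) [Field k] {σ : Type*}
    (W : Submodule k (MvPolynomial σ k)) : Submodule k (MvPolynomial σ k) :=
  Submodule.span k (⋃ i : σ, pderiv i '' (W : Set (MvPolynomial σ k)))

/-- For `W ⊆ S_e` and `u ≤ e`, `hvec k e W u = h_u(W)` is the dimension of the space `D_u(W)`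
spanned by the order `e - u` partial derivatives of the elements of `W`. -/
noncomputable def hvec (k : Type*) [Field k] {σ : Type*} (e : ℕ)
    (W : Submodule k (MvPolynomial σ k)) (u : ℕ) : ℕ :=
  Module.finrank k ((derStep k)^[e - u] W)

namespace MvPolynomial

variable {R σ : Type*} [CommRing R]

theorem pderiv_pderiv_comm (i j : σ) (f : MvPolynomial σ R) :
    pderiv i (pderiv j f) = pderiv j (pderiv i f) := by
  suffices ⁅pderiv (R := R) i, pderiv j⁆ = 0 by
    simpa [Derivation.commutator_apply, sub_eq_zero] using DFunLike.congr_fun this f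
  refine derivation_ext fun l => ?_
  classical
  simp only [Derivation.commutator_apply, pderiv_X, Pi.single_apply]
  split_ifs <;> simp

variable [Fintype σ]

noncomputable def dirDeriv : (σ → R) →ₗ[R] MvPolynomial σ R →ₗ[R] MvPolynomial σ R :=
  Fintype.linearCombination R fun i => (pderiv i).toLinearMap

theorem dirDeriv_apply (v : σ → R) (f : MvPolynomial σ R) :
    dirDeriv v f = ∑ i, v i • pderiv i f := by
  simp [dirDeriv, Fintype.linearCombination_apply]

theorem dirDeriv_single [DecidableEq σ] (i : σ) :
    dirDeriv (Pi.single i 1) = (pderiv i).toLinearMap (R := R) := by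
  simp [dirDeriv]

theorem pderiv_dirDeriv (i : σ) (v : σ → R) (f : MvPolynomial σ R) :
    pderiv i (dirDeriv v f) = dirDeriv v (pderiv i f) := by
  simp [dirDeriv_apply, pderiv_pderiv_comm i]

theorem IsHomogeneous.dirDeriv {f : MvPolynomial σ R} {n : ℕ} (hf : f.IsHomogeneous n)
    (v : σ → R) : (dirDeriv v f).IsHomogeneous (n - 1) := by
  rw [dirDeriv_apply]
  exact IsHomogeneous.sum _ _ _ fun i _ => by
    simpa [smul_eq_C_mul] using (hf.pderiv (i := i)).C_mul (v i)

theorem dirDeriv_X (v : σ → R) (i : σ) : dirDeriv v (X i) = C (v i) := by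
  classical
  simp [dirDeriv_apply, pderiv_X, Pi.single_apply, smul_eq_C_mul]

theorem dirDeriv_linearCombination_X (v c : σ → R) :
    dirDeriv v (Fintype.linearCombination R X c) = C (v ⬝ᵥ c) := by
  rw [Fintype.linearCombination_apply, map_sum, dotProduct, map_sum]
  refine Finset.sum_congr rfl fun i _ => ?_
  rw [map_smul, dirDeriv_X, smul_eq_C_mul, ← C_mul, mul_comm]

end MvPolynomial

section derStep

variable {k σ : Type*} [Field k]

theorem derStep_mono : Monotone (derStep k (σ := σ)) :=
  fun _ _ h => Submodule.span_mono <| Set.iUnion_mono fun _ => Set.image_mono h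

theorem derStep_eq_iSup_map_pderiv (W : Submodule k (MvPolynomial σ k)) :
    derStep k W = ⨆ i, W.map (pderiv i).toLinearMap := by
  simp only [derStep, Submodule.span_iUnion]
  exact iSup_congr fun i => Submodule.span_eq (W.map (pderiv i).toLinearMap)

theorem derStep_le_homogeneousSubmodule {n : ℕ} {W : Submodule k (MvPolynomial σ k)}
    (hW : W ≤ homogeneousSubmodule σ k n) :
    derStep k W ≤ homogeneousSubmodule σ k (n - 1) :=
  Submodule.span_le.mpr <| Set.iUnion_subset fun _ => Set.image_subset_iff.mpr fun _ hf =>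
    (hW hf).pderiv

theorem derStep_iterate_le_homogeneousSubmodule {n : ℕ} {W : Submodule k (MvPolynomial σ k)}
    (hW : W ≤ homogeneousSubmodule σ k n) (m : ℕ) :
    (derStep k)^[m] W ≤ homogeneousSubmodule σ k (n - m) := by
  induction m with
  | zero => exact hW
  | succ m ih =>
    rw [Function.iterate_succ_apply', ← Nat.sub_sub]
    exact derStep_le_homogeneousSubmodule ih

theorem derStep_iterate_bot (n : ℕ) : (derStep k)^[n] (⊥ : Submodule k (MvPolynomial σ k)) = ⊥ :=
  Function.iterate_fixed (by simp [derStep]) n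

variable [Fintype σ]

theorem derStep_eq_iSup_map_dirDeriv (W : Submodule k (MvPolynomial σ k)) :
    derStep k W = ⨆ v, W.map (dirDeriv v) := by
  classical
  refine le_antisymm ?_ (iSup_le fun v => ?_)
  · rw [derStep_eq_iSup_map_pderiv]
    exact iSup_le fun i => (dirDeriv_single (R := k) i ▸ le_iSup (fun v => W.map (dirDeriv v)) _)
  · rintro _ ⟨f, hf, rfl⟩
    rw [dirDeriv_apply]
    exact Submodule.sum_mem _ fun i _ => Submodule.smul_mem _ _ <|
      Submodule.subset_span <| Set.mem_iUnion.mpr ⟨i, f, hf, rfl⟩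

theorem derStep_map_dirDeriv (v : σ → k) (W : Submodule k (MvPolynomial σ k)) :
    derStep k (W.map (dirDeriv v)) = (derStep k W).map (dirDeriv v) := by
  simp only [derStep_eq_iSup_map_pderiv, Submodule.map_iSup, ← Submodule.map_comp]
  exact iSup_congr fun i =>
    congr_arg (Submodule.map · W) (LinearMap.ext fun f => pderiv_dirDeriv i v f)

theorem derStep_iterate_map_dirDeriv (v : σ → k) (n : ℕ) (W : Submodule k (MvPolynomial σ k)) :
    (derStep k)^[n] (W.map (dirDeriv v)) = ((derStep k)^[n] W).map (dirDeriv v) :=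
  Function.Commute.iterate_left (fun W => derStep_map_dirDeriv v W) n W

end derStep

theorem Submodule.eq_top_of_forall_dotProduct_ne_zero {K ι : Type*} [Field K] [Fintype ι]
    {W : Submodule K (ι → K)} (h : ∀ v ≠ 0, ∃ w ∈ W, v ⬝ᵥ w ≠ 0) : W = ⊤ := by
  classical
  by_contra hW
  obtain ⟨φ, hφ, hWφ⟩ := Submodule.exists_dual_map_eq_bot_of_lt_top (lt_top_iff_ne_top.mpr hW)
    inferInstance
  obtain ⟨w, hw, hvw⟩ := h _ ((dotProductEquiv K ι).symm.map_ne_zero_iff.mpr hφ)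
  have hφw : φ w ∈ W.map φ := Submodule.mem_map_of_mem hw
  rw [hWφ, Submodule.mem_bot] at hφw
  apply hvw
  show dotProductEquiv K ι _ w = 0
  rwa [LinearEquiv.apply_symm_apply]

section linearForms

variable {k σ : Type*} [Field k] [Fintype σ]

theorem finrank_eq_card_iff_forall_not_le_ker_dirDeriv {L : Submodule k (MvPolynomial σ k)}
    (hL : L ≤ homogeneousSubmodule σ k 1) :
    Module.finrank k L = Fintype.card σ ↔ ∀ v ≠ 0, ¬ L ≤ LinearMap.ker (dirDeriv v) := by
  set ι := Fintype.linearCombination k (X : σ → MvPolynomial σ k)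
  have hS : homogeneousSubmodule σ k 1 = LinearMap.range ι := by
    rw [homogeneousSubmodule_one_eq_span_X, Fintype.range_linearCombination]
  have hι : Function.Injective ι :=
    (linearIndependent_X (R := k) (σ := σ)).fintypeLinearCombination_injective
  have hSrank : Module.finrank k (homogeneousSubmodule σ k 1) = Fintype.card σ := by
    rw [hS, LinearMap.finrank_range_of_inj hι, Module.finrank_fintype_fun_eq_card]
  have : FiniteDimensional k (homogeneousSubmodule σ k 1) := hS ▸ inferInstance
  rw [← hSrank]
  constructor
  · intro hLrank v hv hker
    obtain ⟨i, hi⟩ := Function.ne_iff.mp hv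
    have hXi : X i ∈ L := Submodule.eq_of_le_of_finrank_eq hL hLrank ▸ isHomogeneous_X k i
    exact hi (by simpa [dirDeriv_X] using hker hXi)
  · intro h
    suffices L.comap ι = ⊤ by
      rw [le_antisymm hL (hS ▸ LinearMap.range_le_iff_comap.mpr this)]
    refine Submodule.eq_top_of_forall_dotProduct_ne_zero fun v hv => ?_
    obtain ⟨f, hfL, hf⟩ := Set.not_subset.mp (h v hv)
    obtain ⟨c, rfl⟩ := hS ▸ hL hfL
    exact ⟨c, hfL, fun hc => hf (by simp [ι, dirDeriv_linearCombination_X, hc])⟩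

end linearForms

section CharZero

variable {k σ : Type*} [Field k] [CharZero k] [Fintype σ]

theorem MvPolynomial.IsHomogeneous.eq_zero_of_derStep_iterate_eq_bot {f : MvPolynomial σ k}
    {n : ℕ} (hf : f.IsHomogeneous n) (h : (derStep k)^[n] (Submodule.span k {f}) = ⊥) :
    f = 0 := by
  induction n generalizing f with
  | zero => simpa using h
  | succ n ih =>
    have hpderiv : ∀ i, pderiv i f = 0 := fun i => ih hf.pderiv <| le_bot_iff.mp <| h ▸
      derStep_mono.iterate n (Submodule.span_le.mpr <| Set.singleton_subset_iff.mpr <|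
        Submodule.subset_span <|
          Set.mem_iUnion.mpr ⟨i, f, Submodule.mem_span_singleton_self f, rfl⟩)
    simpa [hpderiv, eq_comm (a := (0 : MvPolynomial σ k)), Nat.cast_add_one_ne_zero] using
      hf.sum_X_mul_pderiv

theorem le_ker_dirDeriv_iff_iterate_derStep_le {e : ℕ} {W : Submodule k (MvPolynomial σ k)}
    (hW : W ≤ homogeneousSubmodule σ k e) (v : σ → k) :
    W ≤ LinearMap.ker (dirDeriv v) ↔ (derStep k)^[e - 1] W ≤ LinearMap.ker (dirDeriv v) := by
  simp only [LinearMap.le_ker_iff_map]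
  refine ⟨fun h => by rw [← derStep_iterate_map_dirDeriv, h, derStep_iterate_bot], fun h => ?_⟩
  refine LinearMap.le_ker_iff_map.mp fun f hf =>
    ((hW hf).dirDeriv v).eq_zero_of_derStep_iterate_eq_bot ?_
  refine le_bot_iff.mp (h ▸ derStep_iterate_map_dirDeriv v (e - 1) W ▸ derStep_mono.iterate _ ?_)
  exact Submodule.span_le.mpr (Set.singleton_subset_iff.mpr (Submodule.mem_map_of_mem hf))

theorem hvec_one_eq_card_iff {e : ℕ} (he : 1 ≤ e) {W : Submodule k (MvPolynomial σ k)}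
    (hW : W ≤ homogeneousSubmodule σ k e) :
    hvec k e W 1 = Fintype.card σ ↔ ∀ v ≠ 0, ¬ W ≤ LinearMap.ker (dirDeriv v) := by
  have hL : (derStep k)^[e - 1] W ≤ homogeneousSubmodule σ k 1 := by
    simpa [Nat.sub_sub_self he] using derStep_iterate_le_homogeneousSubmodule hW (e - 1)
  simp only [hvec, finrank_eq_card_iff_forall_not_le_ker_dirDeriv hL,
    le_ker_dirDeriv_iff_iterate_derStep_le hW]

end CharZero

namespace LinearMap

open Module Submodule

variable {k E V M : Type*} [Field k] [AddCommGroup E] [Module k E] [AddCommGroup V] [Module k V]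
  [AddCommGroup M] [Module k M]

theorem exists_eq_smul_of_ker_le {β : Dual k V} (hβ : β ≠ 0) {f : V →ₗ[k] M}
    (h : ker β ≤ ker f) : ∃ m, ∀ x, f x = β x • m := by
  obtain ⟨x₀, hx₀⟩ := LinearMap.surjective hβ 1
  refine ⟨f x₀, fun x => ?_⟩
  have hker : x - β x • x₀ ∈ ker β := by simp [hx₀]
  simpa [sub_eq_zero] using h hker

variable (B : E →ₗ[k] V →ₗ[k] M)

theorem forall_apply_mem_of_mem_span {s : Set E} {H : Submodule k M}
    (hs : ∀ z ∈ s, ∀ x, B z x ∈ H) : ∀ z ∈ span k s, ∀ x, B z x ∈ H := by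
  have : span k s ≤ ⨅ x, H.comap (B.flip x) :=
    span_le.mpr fun z hz => mem_iInf _ |>.mpr fun x => hs z hz x
  exact fun z hz x => (mem_iInf _).mp (this hz) x

theorem finrank_iSup_range_le [FiniteDimensional k E] [FiniteDimensional k V] {Z Y : Submodule k E}
    (hZY : Codisjoint Z Y) {H : Submodule k M} [FiniteDimensional k H]
    (hZH : ∀ z ∈ Z, ∀ x, B z x ∈ H) :
    finrank k ↥(⨆ v, LinearMap.range (B v)) ≤ finrank k H + finrank k Y * finrank k V := by
  set T := TensorProduct.lift (B ∘ₗ Y.subtype)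
  have hle : ⨆ v, LinearMap.range (B v) ≤ H ⊔ LinearMap.range T := by
    refine iSup_le fun v => ?_
    rintro _ ⟨x, rfl⟩
    obtain ⟨z, hz, y, hy, rfl⟩ := mem_sup.mp (hZY.eq_top ▸ mem_top : v ∈ Z ⊔ Y)
    rw [map_add, LinearMap.add_apply]
    exact add_mem (mem_sup_left (hZH z hz x)) (mem_sup_right ⟨⟨y, hy⟩ ⊗ₜ x, by simp [T]⟩)
  calc finrank k ↥(⨆ v, LinearMap.range (B v))
      ≤ finrank k ↥(H ⊔ LinearMap.range T) := finrank_mono hle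
    _ ≤ finrank k H + finrank k (LinearMap.range T) := finrank_add_le_finrank_add_finrank _ _
    _ ≤ finrank k H + finrank k Y * finrank k V := by
      grw [T.finrank_range_le, finrank_tensorProduct]

section basis

variable {ι : Type*} [Fintype ι] (b : Basis ι k V) {w : ι → E} {h : ι → M}

theorem apply_sum_smul_apply_basis (hw : ∀ i x, B (w i) x = b.coord i x • h i) (g : ι → k)
    (j : ι) : B (∑ i, g i • w i) (b j) = g j • h j := by
  classical
  simp [hw, Finsupp.single_apply]

theorem linearIndependent_of_apply_eq_coord_smul (hh : ∀ i, h i ≠ 0)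
    (hw : ∀ i x, B (w i) x = b.coord i x • h i) : LinearIndependent k w :=
  Fintype.linearIndependent_iff.mpr fun g hg j => by
    simpa [hh j, hg] using (apply_sum_smul_apply_basis B b hw g j).symm

end basis

theorem exists_finrank_add_sq_le [FiniteDimensional k V] (hB : Function.Injective B)
    (hhyp : ∀ β : Dual k V, β ≠ 0 → ∃ v ≠ 0, ∀ x, β x = 0 → B v x = 0) :
    ∃ (Z : Submodule k E) (H : Submodule k M), FiniteDimensional k H ∧
      (∀ z ∈ Z, ∀ x, B z x ∈ H) ∧
      finrank k H + finrank k V * finrank k V ≤ finrank k Z * finrank k V + 1 := by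
  obtain ⟨t, ht⟩ : ∃ t, finrank k V = t := ⟨_, rfl⟩
  rcases t with _ | t
  · exact ⟨⊥, ⊥, inferInstance, by simp, by simp [ht]⟩
  have hfactor : ∀ β : Dual k V, β ≠ 0 → ∃ v h, h ≠ 0 ∧ ∀ x, B v x = β x • h := by
    intro β hβ
    obtain ⟨v, hv, hker⟩ := hhyp β hβ
    obtain ⟨h, hh⟩ := exists_eq_smul_of_ker_le hβ (f := B v) fun x hx => hker x hx
    refine ⟨v, h, fun h0 => hv (hB ?_), hh⟩
    ext x
    simp [hh, h0]
  let b := Module.finBasisOfFinrankEq k V ht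
  choose w h hh hw using fun i => hfactor (b.coord i) fun h0 => by
    simpa using congr($h0 (b i))
  obtain ⟨w₀, h₀, hh₀, hw₀⟩ := hfactor b.sumCoords fun h0 => by
    simpa using congr($h0 (b 0))
  have hind := linearIndependent_of_apply_eq_coord_smul B b hh hw
  refine ⟨span k (Set.range (Fin.cons w₀ w)), span k (Set.range (Fin.cons h₀ h)),
    FiniteDimensional.span_of_finite k (Set.finite_range _), forall_apply_mem_of_mem_span B ?_, ?_⟩
  · rintro _ ⟨i, rfl⟩ x
    cases i using Fin.cases <;> simp only [Fin.cons_zero, Fin.cons_succ, hw₀, hw] <;>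
      exact smul_mem _ _ (subset_span (by simp))
  by_cases hw₀mem : w₀ ∈ span k (Set.range w)
  · obtain ⟨c, rfl⟩ := (mem_span_range_iff_exists_fun k).mp hw₀mem
    have hh₀c : ∀ j, h₀ = c j • h j := fun j => by
      rw [← apply_sum_smul_apply_basis B b hw c j, hw₀, b.sumCoords_self_apply, one_smul]
    have hZ : span k (Set.range (Fin.cons (∑ i, c i • w i) w)) = span k (Set.range w) := by
      rw [Fin.range_cons, span_insert_eq_span hw₀mem]
    have hH : span k (Set.range (Fin.cons h₀ h)) ≤ k ∙ h₀ := by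
      refine span_le.mpr (Set.range_subset_iff.mpr fun i => ?_)
      cases i using Fin.cases with
      | zero => exact mem_span_singleton_self h₀
      | succ j =>
        have hcj : c j ≠ 0 := fun hc => hh₀ (by simp [hh₀c j, hc])
        exact mem_span_singleton.mpr ⟨(c j)⁻¹, by simp [hh₀c j, smul_smul, hcj]⟩
    grw [hZ, finrank_span_eq_card hind, finrank_mono hH, finrank_span_singleton hh₀, ht]
    simp [add_comm]
  · have hH : finrank k (span k (Set.range (Fin.cons h₀ h))) ≤ Fintype.card (Fin (t + 2)) :=
      finrank_range_le_card (R := k) _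
    grw [finrank_span_eq_card (hind.finCons hw₀mem), hH, ht]
    simp only [Fintype.card_fin]
    nlinarith

theorem finrank_iSup_range_add_sq_le [FiniteDimensional k E] [FiniteDimensional k V]
    (hB : Function.Injective B)
    (hhyp : ∀ β : Dual k V, β ≠ 0 → ∃ v ≠ 0, ∀ x, β x = 0 → B v x = 0) :
    finrank k ↥(⨆ v, LinearMap.range (B v)) + finrank k V * finrank k V ≤
      finrank k E * finrank k V + 1 := by
  obtain ⟨Z, H, hH, hZH, hrank⟩ := exists_finrank_add_sq_le B hB hhyp
  obtain ⟨Y, hZY⟩ := Z.exists_isCompl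
  have hbound := finrank_iSup_range_le B hZY.codisjoint hZH
  rw [← finrank_add_eq_of_isCompl hZY, add_mul]
  linarith

end LinearMap

theorem corollary_2_10_general {k : Type*} [Field k] [CharZero k] {r : ℕ}
    {e t : ℕ} (he : 2 ≤ e) (ht : 2 ≤ t)
    (V : Submodule k (MvPolynomial (Fin r) k))
    (hVhom : ∀ f ∈ V, MvPolynomial.IsHomogeneous f e)
    (hVdim : Module.finrank k V = t)
    (hcodim : hvec k e V 1 = r)
    (hbound : (hvec k e V (e - 1) : ℤ) ≥ (r : ℤ) * t - t ^ 2 + 2) :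
    ∃ W : Submodule k (MvPolynomial (Fin r) k), W ≤ V ∧
      Module.finrank k W = t - 1 ∧ hvec k e W 1 = r := by
  have : FiniteDimensional k V := .of_finrank_pos (by omega)
  have hiff : ∀ W ≤ V, hvec k e W 1 = r ↔ ∀ v ≠ 0, ¬ W ≤ LinearMap.ker (dirDeriv v) :=
    fun W hW => by simpa using hvec_one_eq_card_iff (by omega) (hW.trans hVhom)
  by_contra! hno
  let B := (dirDeriv (σ := Fin r) (R := k)).compl₂ V.subtype
  have hB : Function.Injective B := (injective_iff_map_eq_zero B).mpr fun v hv => by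
    by_contra hv0
    exact (hiff V le_rfl).mp hcodim v hv0 fun x hx => congr($hv ⟨x, hx⟩)
  have hhyp : ∀ β : Module.Dual k V, β ≠ 0 → ∃ v ≠ 0, ∀ x, β x = 0 → B v x = 0 := by
    intro β hβ
    have hWV := Submodule.map_subtype_le V (LinearMap.ker β)
    have hW := hno _ hWV (by
      rw [Submodule.finrank_map_subtype_eq, ← hVdim, ← β.finrank_ker_add_one_of_ne_zero hβ,
        Nat.add_sub_cancel])
    obtain ⟨v, hv, hker⟩ : ∃ v ≠ 0, _ ≤ LinearMap.ker (dirDeriv v) := by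
      simpa [hiff _ hWV] using hW
    exact ⟨v, hv, fun x hx => hker ⟨x, hx, rfl⟩⟩
  have hsup : ⨆ v, LinearMap.range (B v) = derStep k V := by
    rw [derStep_eq_iSup_map_dirDeriv]
    exact iSup_congr fun v =>
      (LinearMap.range_comp V.subtype (dirDeriv v)).trans (congr_arg _ V.range_subtype)
  have hD : hvec k e V (e - 1) = Module.finrank k (derStep k V) := by
    rw [hvec, Nat.sub_sub_self (by omega : 1 ≤ e), Function.iterate_one]
  have hrank := B.finrank_iSup_range_add_sq_le hB hhyp
  rw [hsup, hVdim, Module.finrank_fin_fun, ← hD] at hrank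
  zify at hrank
  linarith

/-- Corollary 2.10: if `h_1(V) = r` and `h_{e-1}(V) ≥ r·t - t² + 2`, then there is a level
quotient of type `t - 1` and the same socle degree having codimension `r`, i.e. a
`(t - 1)`-dimensional subspace `W ⊆ V` with `h_1(W) = r`. -/
theorem corollary_2_10 {k : Type*} [Field k] [CharZero k] {r : ℕ} (hr : 1 ≤ r)
    {e t : ℕ} (he : 2 ≤ e) (ht : 2 ≤ t)
    (V : Submodule k (MvPolynomial (Fin r) k))
    (hVhom : ∀ f ∈ V, MvPolynomial.IsHomogeneous f e)
    (hVdim : Module.finrank k V = t)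
    (hcodim : hvec k e V 1 = r)
    (hbound : (hvec k e V (e - 1) : ℤ) ≥ (r : ℤ) * t - t ^ 2 + 2) :
    ∃ W : Submodule k (MvPolynomial (Fin r) k), W ≤ V ∧
      Module.finrank k W = t - 1 ∧ hvec k e W 1 = r :=
  corollary_2_10_general he ht V hVhom hVdim hcodim hbound
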